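/- Let m, m', p be positive integers, ρ_in : SO(3) → GL(m,ℝ), ρ_q : SO(3) → GL(m',ℝ) group homomorphisms, and ρ_out : SO(3) → O(p) a group homomorphism into orthogonal matrices. Let W'_Q ∈ ℝ^{p×m'} satisfy W'_Q·ρ_q(r) = ρ_out(r)·W'_Q for all r ∈ SO(3), and let W_K, W_V : ℝ³ → ℝ^{p×m} satisfy W_K(R_r·y)·ρ_in(r) = ρ_out(r)·W_K(y) and W_V(R_r·y)·ρ_in(r) = ρ_out(r)·W_V(y) for all r ∈ SO(3), y ∈ ℝ³. Let X : Fin N → ℝ³ be a point cloud, F : Fin N → ℝ^m features, q ∈ ℝ³ a query with a unique nearest point in X of index c, and f_q ∈ ℝ^{m'} a query feature. Define the cross-attention layer CA(F,X,f_q,q) = Σ_{j ∈ N_c^k(X)} β(j) · W_V(X j − q)·F j, where β(j) = exp(⟨W'_Q·f_q, W_K(X j − q)·F j⟩) / Σ_{j' ∈ N_c^k(X)} exp(⟨W'_Q·f_q, W_K(X j' − q)·F j'⟩). Then for every r ∈ SO(3) with rotation matrix R and every T ∈ ℝ³: CA(ρ_in(r)∘F, L_{(R,T)}[X], ρ_q(r)·f_q,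 R·q + T) = ρ_out(r)·CA(F,X,f_q,q). -/

import Mathlib

/-
Rotating and translating the cloud and the query together preserves all pairwise distances, so
the neighbourhood `N_c^k` is unchanged, and maps every relative position `X j - q` to
`R (X j - q)`. The equivariance of `W_K`, `W_V` and `W'_Q` then turns the rotated keys, values and
query into `ρ_out(r)` times the original ones; as `ρ_out(r)` is orthogonal the attention scores, and
hence the softmax weights, are invariant, and `ρ_out(r)` factors out of the weighted sum of values.
-/

open Matrix

noncomputable section

/-- `SO(3)`: real 3×3 orthogonal matrices of determinant 1. -/
abbrev SO3 := Matrix.specialOrthogonalGroup (Fin 3) ℝ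

noncomputable instance : Group SO3 :=
  { (inferInstance : Monoid SO3) with
    inv := fun A => ⟨star A.1, ⟨Unitary.star_mem A.2.1, by
      have h : (star A.1).det = star (A.1.det) := by
        rw [Matrix.star_eq_conjTranspose, Matrix.det_conjTranspose]
      have h2 : A.1.det = 1 := A.2.2
      simpa [MonoidHom.mem_mker, h2] using h⟩⟩
    inv_mul_cancel := fun A => Subtype.ext A.2.1.1 }

/-- Euclidean 3-space. -/
abbrev V3 := EuclideanSpace ℝ (Fin 3)

/-- Matrix-vector multiplication on Euclidean 3-space. -/
def mv (M : Matrix (Fin 3) (Fin 3) ℝ) (v : V3) : V3 :=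
  (WithLp.equiv 2 (Fin 3 → ℝ)).symm (M *ᵥ (WithLp.equiv 2 (Fin 3 → ℝ) v))

/-- Roto-translation action `L_{(R,T)}` on point clouds: `(L_{(R,T)}[X]) i = R·(X i) + T`. -/
def rt {N : ℕ} (R : SO3) (T : V3) (X : Fin N → V3) : Fin N → V3 :=
  fun i => mv (R : Matrix (Fin 3) (Fin 3) ℝ) (X i) + T

open scoped Classical in
/-- `d_k(X,i)`: the k-th smallest distance from `X i` to points of `X`. -/
def dk {N : ℕ} (X : Fin N → V3) (i : Fin N) (k : ℕ) : ℝ :=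
  sInf { d : ℝ | k ≤ (Finset.univ.filter (fun j => ‖X i - X j‖ ≤ d)).card }

open scoped Classical in
/-- `N_i^k(X)`: the k-nearest-neighbor neighborhood of point `i` (including ties). -/
def nbhd {N : ℕ} (X : Fin N → V3) (i : Fin N) (k : ℕ) : Finset (Fin N) :=
  Finset.univ.filter (fun j => ‖X i - X j‖ ≤ dk X i k)

/-- The cross-attention layer `CA(F,X,f_q,q) = Σ_{j ∈ N_c^k(X)} β(j)·W_V(X j − q)·F j`,
where `c` is the (unique) nearest point of the query `q` in `X` and
`β(j) = exp⟨W'_Q·f_q, W_K(X j − q)·F j⟩ / Σ_{j' ∈ N_c^k(X)} exp⟨W'_Q·f_q, W_K(X j' − q)·F j'⟩`. -/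
def crossAttn {N : ℕ} (m m' p k : ℕ) (W'Q : Matrix (Fin p) (Fin m') ℝ)
    (WK WV : V3 → Matrix (Fin p) (Fin m) ℝ)
    (X : Fin N → V3) (F : Fin N → (Fin m → ℝ)) (fq : Fin m' → ℝ) (q : V3) (c : Fin N) :
    Fin p → ℝ :=
  ∑ j ∈ nbhd X c k,
    (Real.exp ((W'Q *ᵥ fq) ⬝ᵥ (WK (X j - q) *ᵥ F j)) /
      ∑ j' ∈ nbhd X c k, Real.exp ((W'Q *ᵥ fq) ⬝ᵥ (WK (X j' - q) *ᵥ F j'))) •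
      (WV (X j - q) *ᵥ F j)

theorem dotProduct_mulVec_mulVec_of_mem_orthogonalGroup {n R : Type*} [Fintype n]
    [DecidableEq n] [CommRing R] {A : Matrix n n R} (hA : A ∈ orthogonalGroup n R) (x y : n → R) :
    (A *ᵥ x) ⬝ᵥ (A *ᵥ y) = x ⬝ᵥ y := by
  rw [dotProduct_mulVec, ← mulVec_transpose, mulVec_mulVec,
    (mem_orthogonalGroup_iff' n R).mp hA, one_mulVec]

theorem mulVec_mulVec_of_mul_eq {l m n o R : Type*} [Fintype m] [Fintype n] [Fintype o]
    [NonUnitalSemiring R] {W : Matrix l m R} {P : Matrix m n R} {Q : Matrix l o R}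
    {W' : Matrix o n R} (h : W * P = Q * W') (v : n → R) : W *ᵥ (P *ᵥ v) = Q *ᵥ (W' *ᵥ v) := by
  rw [mulVec_mulVec, h, ← mulVec_mulVec]

theorem mv_sub (M : Matrix (Fin 3) (Fin 3) ℝ) (u v : V3) : mv M (u - v) = mv M u - mv M v := by
  simp [mv, mulVec_sub]

theorem norm_mv_of_mem_orthogonalGroup {M : Matrix (Fin 3) (Fin 3) ℝ}
    (hM : M ∈ orthogonalGroup (Fin 3) ℝ) (v : V3) : ‖mv M v‖ = ‖v‖ := by
  rw [norm_eq_sqrt_real_inner, norm_eq_sqrt_real_inner]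
  simp only [EuclideanSpace.inner_eq_star_dotProduct]
  simp [mv, dotProduct_mulVec_mulVec_of_mem_orthogonalGroup hM]

theorem rt_sub_mv_add {N : ℕ} (R : SO3) (T : V3) (X : Fin N → V3) (j : Fin N) (v : V3) :
    rt R T X j - (mv (R : Matrix (Fin 3) (Fin 3) ℝ) v + T) =
      mv (R : Matrix (Fin 3) (Fin 3) ℝ) (X j - v) := by
  rw [mv_sub, rt, add_sub_add_right_eq_sub]

theorem norm_rt_sub_rt {N : ℕ} (R : SO3) (T : V3) (X : Fin N → V3) (i j : Fin N) :
    ‖rt R T X i - rt R T X j‖ = ‖X i - X j‖ := by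
  rw [show rt R T X j = mv (R : Matrix (Fin 3) (Fin 3) ℝ) (X j) + T from rfl, rt_sub_mv_add,
    norm_mv_of_mem_orthogonalGroup R.2.1]

theorem nbhd_congr {N : ℕ} {X Y : Fin N → V3} {i : Fin N} (k : ℕ)
    (h : ∀ j, ‖Y i - Y j‖ = ‖X i - X j‖) : nbhd Y i k = nbhd X i k := by
  simp only [nbhd, dk, h]
  congr!

theorem nbhd_rt {N : ℕ} (R : SO3) (T : V3) (X : Fin N → V3) (i : Fin N) (k : ℕ) :
    nbhd (rt R T X) i k = nbhd X i k :=
  nbhd_congr k (norm_rt_sub_rt R T X i)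

theorem crossAttn_equivariant_general (N m m' p : ℕ)
    (ρin : SO3 →* GL (Fin m) ℝ) (ρq : SO3 →* GL (Fin m') ℝ)
    (ρout : SO3 →* Matrix.orthogonalGroup (Fin p) ℝ)
    (W'Q : Matrix (Fin p) (Fin m') ℝ)
    (hW'Q : ∀ r : SO3, W'Q * ((ρq r : GL (Fin m') ℝ) : Matrix (Fin m') (Fin m') ℝ) =
      (ρout r : Matrix (Fin p) (Fin p) ℝ) * W'Q)
    (WK WV : V3 → Matrix (Fin p) (Fin m) ℝ)
    (hWK : ∀ (r : SO3) (y : V3),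
      WK (mv (r : Matrix (Fin 3) (Fin 3) ℝ) y) *
          ((ρin r : GL (Fin m) ℝ) : Matrix (Fin m) (Fin m) ℝ) =
        (ρout r : Matrix (Fin p) (Fin p) ℝ) * WK y)
    (hWV : ∀ (r : SO3) (y : V3),
      WV (mv (r : Matrix (Fin 3) (Fin 3) ℝ) y) *
          ((ρin r : GL (Fin m) ℝ) : Matrix (Fin m) (Fin m) ℝ) =
        (ρout r : Matrix (Fin p) (Fin p) ℝ) * WV y)
    (X : Fin N → V3) (F : Fin N → (Fin m → ℝ)) (k : ℕ)
    (q : V3) (c : Fin N) (fq : Fin m' → ℝ) (r : SO3) (T : V3) :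
    crossAttn m m' p k W'Q WK WV (rt r T X)
        (fun i' => ((ρin r : GL (Fin m) ℝ) : Matrix (Fin m) (Fin m) ℝ) *ᵥ F i')
        (((ρq r : GL (Fin m') ℝ) : Matrix (Fin m') (Fin m') ℝ) *ᵥ fq)
        (mv (r : Matrix (Fin 3) (Fin 3) ℝ) q + T) c =
      (ρout r : Matrix (Fin p) (Fin p) ℝ) *ᵥ crossAttn m m' p k W'Q WK WV X F fq q c := by
  have hscore : ∀ j,
      (W'Q *ᵥ (((ρq r : GL (Fin m') ℝ) : Matrix (Fin m') (Fin m') ℝ) *ᵥ fq)) ⬝ᵥ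
        (WK (rt r T X j - (mv (r : Matrix (Fin 3) (Fin 3) ℝ) q + T)) *ᵥ
          (((ρin r : GL (Fin m) ℝ) : Matrix (Fin m) (Fin m) ℝ) *ᵥ F j)) =
      (W'Q *ᵥ fq) ⬝ᵥ (WK (X j - q) *ᵥ F j) := fun j => by
    rw [rt_sub_mv_add, mulVec_mulVec_of_mul_eq (hW'Q r), mulVec_mulVec_of_mul_eq (hWK r _),
      dotProduct_mulVec_mulVec_of_mem_orthogonalGroup (ρout r).2]
  have hvalue : ∀ j,
      WV (rt r T X j - (mv (r : Matrix (Fin 3) (Fin 3) ℝ) q + T)) *ᵥ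
          (((ρin r : GL (Fin m) ℝ) : Matrix (Fin m) (Fin m) ℝ) *ᵥ F j) =
        (ρout r : Matrix (Fin p) (Fin p) ℝ) *ᵥ (WV (X j - q) *ᵥ F j) := fun j => by
    rw [rt_sub_mv_add, mulVec_mulVec_of_mul_eq (hWV r _)]
  simp only [crossAttn, nbhd_rt, hscore, hvalue, mulVec_sum, mulVec_smul]

/-- the cross-attention layer is SE(3)-equivariant:
`CA(ρ_in(r)∘F, L_{(R,T)}[X], ρ_q(r)·f_q, R·q + T) = ρ_out(r)·CA(F,X,f_q,q)`. -/
theorem crossAttn_equivariant (N m m' p : ℕ) (hm : 0 < m) (hm' : 0 < m') (hp : 0 < p)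
    (ρin : SO3 →* GL (Fin m) ℝ) (ρq : SO3 →* GL (Fin m') ℝ)
    (ρout : SO3 →* Matrix.orthogonalGroup (Fin p) ℝ)
    (W'Q : Matrix (Fin p) (Fin m') ℝ)
    (hW'Q : ∀ r : SO3, W'Q * ((ρq r : GL (Fin m') ℝ) : Matrix (Fin m') (Fin m') ℝ) =
      (ρout r : Matrix (Fin p) (Fin p) ℝ) * W'Q)
    (WK WV : V3 → Matrix (Fin p) (Fin m) ℝ)
    (hWK : ∀ (r : SO3) (y : V3),
      WK (mv (r : Matrix (Fin 3) (Fin 3) ℝ) y) *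
          ((ρin r : GL (Fin m) ℝ) : Matrix (Fin m) (Fin m) ℝ) =
        (ρout r : Matrix (Fin p) (Fin p) ℝ) * WK y)
    (hWV : ∀ (r : SO3) (y : V3),
      WV (mv (r : Matrix (Fin 3) (Fin 3) ℝ) y) *
          ((ρin r : GL (Fin m) ℝ) : Matrix (Fin m) (Fin m) ℝ) =
        (ρout r : Matrix (Fin p) (Fin p) ℝ) * WV y)
    (X : Fin N → V3) (F : Fin N → (Fin m → ℝ)) (k : ℕ) (hk1 : 1 ≤ k) (hkN : k ≤ N)
    (q : V3) (c : Fin N) (hc : ∀ i : Fin N, i ≠ c → ‖q - X c‖ < ‖q - X i‖)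
    (fq : Fin m' → ℝ) (r : SO3) (T : V3) :
    crossAttn m m' p k W'Q WK WV (rt r T X)
        (fun i' => ((ρin r : GL (Fin m) ℝ) : Matrix (Fin m) (Fin m) ℝ) *ᵥ F i')
        (((ρq r : GL (Fin m') ℝ) : Matrix (Fin m') (Fin m') ℝ) *ᵥ fq)
        (mv (r : Matrix (Fin 3) (Fin 3) ℝ) q + T) c =
      (ρout r : Matrix (Fin p) (Fin p) ℝ) *ᵥ crossAttn m m' p k W'Q WK WV X F fq q c :=
  crossAttn_equivariant_general N m m' p ρin ρq ρout W'Q hW'Q WK WV hWK hWV X F k q c fq r T
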